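/- For every α ∈ B∞(λ) and every ᾱ ∈ Ω*, one has ‖Dᵀα − Dᵀᾱ‖² ≤ 2ℓ (f̄(α) − f̄(ᾱ)); consequently ‖β*(α) − β*(ᾱ)‖² ≤ (2ℓ/μ²)(f̄(α) − f̄(ᾱ)). -/

import Mathlib

open scoped RealInnerProductSpace
open Matrix

/-- The ℓ∞-ball of radius `lam` in `ℝ^m`. -/
def BinfBall (m : ℕ) (lam : ℝ) : Set (EuclideanSpace ℝ (Fin m)) :=
  {a | ∀ i, |a i| ≤ lam}

/-!
Write `A = Dᵀ` and `β = β*`, so that `∇f (β α) = A α` and `f̄ α = ⟪A α, β α⟫ - f (β α)`.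
Strong monotonicity of `∇f` gives `μ ‖β α - β α'‖ ≤ ‖A α - A α'‖`; this makes `f̄`
differentiable with gradient `α ↦ D (β α)`, and turns the first bound into the second.
Since `∇f` is `ℓ`-Lipschitz, the descent lemma makes `f*` `(1/ℓ)`-strongly convex:
`f̄ α ≥ f̄ ᾱ + ⟪A α - A ᾱ, β ᾱ⟫ + ‖A α - A ᾱ‖² / (2ℓ)`. The inner product is the derivative
of `f̄` at `ᾱ` in the direction `α - ᾱ`, hence nonnegative because `ᾱ` minimises `f̄` over
the convex set `B∞(λ)`.
-/

open Set Asymptotics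

theorem hasFDerivAt_of_abs_sub_le_mul_sq {F : Type*} [NormedAddCommGroup F] [NormedSpace ℝ F]
    {φ : F → ℝ} {L : F →L[ℝ] ℝ} {x : F} {C : ℝ}
    (h : ∀ y, |φ y - φ x - L (y - x)| ≤ C * ‖y - x‖ ^ 2) : HasFDerivAt φ L x :=
  .of_isLittleO <| (IsBigO.of_bound C (.of_forall fun y => by simpa using h y)).trans_isLittleO
    (isLittleO_pow_sub_sub x one_lt_two)

section Conjugate

variable {E : Type*} [NormedAddCommGroup E] [InnerProductSpace ℝ E] {f : E → ℝ}

theorem IsLUB.eq_inner_sub_of_forall_le {y p : E} {c : ℝ}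
    (hc : IsLUB (range fun β => ⟪y, β⟫ - f β) c) (hp : ∀ β, ⟪y, β⟫ - f β ≤ ⟪y, p⟫ - f p) :
    c = ⟪y, p⟫ - f p :=
  hc.unique (IsGreatest.isLUB ⟨⟨p, rfl⟩, by rintro _ ⟨β, rfl⟩; exact hp β⟩)

theorem mul_norm_sub_le_of_strongly_monotone {g : E → E} {μ : ℝ}
    (hsc : ∀ x y, μ * ‖x - y‖ ^ 2 ≤ ⟪g x - g y, x - y⟫) (x y : E) :
    μ * ‖x - y‖ ≤ ‖g x - g y‖ := by
  rcases (norm_nonneg (x - y)).eq_or_lt with h | h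
  · simp [← h]
  · refine le_of_mul_le_mul_right ?_ h
    nlinarith [hsc x y, real_inner_le_norm (g x - g y) (x - y)]

theorem hasFDerivAt_conjugate_comp {F : Type*} [NormedAddCommGroup F] [NormedSpace ℝ F]
    {fstar : E → ℝ} (hfstar : ∀ x, IsLUB (range fun β => ⟪x, β⟫ - f β) (fstar x))
    (A : F →L[ℝ] E) {β : F → E} (hmax : ∀ a b, ⟪A a, b⟫ - f b ≤ ⟪A a, β a⟫ - f (β a))
    {μ : ℝ} (hμ : 0 < μ) (hβ : ∀ a a', μ * ‖β a - β a'‖ ≤ ‖A a - A a'‖) (a : F) :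
    HasFDerivAt (fun a => fstar (A a)) ((innerSL ℝ (β a)).comp A) a := by
  refine hasFDerivAt_of_abs_sub_le_mul_sq (C := ‖A‖ ^ 2 / μ) fun y => ?_
  have hval : ∀ a, fstar (A a) = ⟪A a, β a⟫ - f (β a) :=
    fun a => (hfstar _).eq_inner_sub_of_forall_le (hmax a)
  -- testing the suprema at `β a` and `β y` puts the remainder between `0` and
  -- `⟪A y - A a, β y - β a⟫`
  have hlow := (hfstar (A y)).1 ⟨β a, rfl⟩
  have hup := (hfstar (A a)).1 ⟨β y, rfl⟩
  simp only [hval] at hlow hup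
  have hcs : ⟪A y - A a, β y - β a⟫ ≤ ‖A y - A a‖ ^ 2 / μ := by
    rw [le_div_iff₀ hμ]
    nlinarith [real_inner_le_norm (A y - A a) (β y - β a), hβ y a, norm_nonneg (A y - A a)]
  have hA : ‖A y - A a‖ ^ 2 / μ ≤ ‖A‖ ^ 2 / μ * ‖y - a‖ ^ 2 := by
    rw [div_mul_eq_mul_div, ← mul_pow, ← map_sub]
    gcongr
    exact A.le_opNorm (y - a)
  simp only [ContinuousLinearMap.comp_apply, innerSL_apply_apply, map_sub, hval]
  simp only [inner_sub_left, inner_sub_right, real_inner_comm (β a)] at hlow hup hcs ⊢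
  rw [abs_le]
  constructor <;> linarith

variable [CompleteSpace E] {f' : E → E}

theorem HasGradientAt.eq_of_forall_inner_sub_le {g y p : E} (hf : HasGradientAt f g p)
    (hp : ∀ β, ⟪y, β⟫ - f β ≤ ⟪y, p⟫ - f p) : g = y := by
  have hmax : IsLocalMax (fun β => ⟪y, β⟫ - f β) p := .of_forall hp
  have h0 := hmax.hasFDerivAt_eq_zero
    (((InnerProductSpace.toDual ℝ E y).hasFDerivAt).sub hf.hasFDerivAt)
  rw [← map_sub, LinearIsometryEquiv.map_eq_zero_iff, sub_eq_zero] at h0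
  exact h0.symm

theorem le_add_inner_add_sq_of_lipschitz_gradient {ℓ : ℝ}
    (hgrad : ∀ x, HasGradientAt f (f' x) x) (hlip : ∀ x y, ‖f' x - f' y‖ ≤ ℓ * ‖x - y‖)
    (x v : E) : f (x + v) ≤ f x + ⟪f' x, v⟫ + ℓ / 2 * ‖v‖ ^ 2 := by
  let φ : ℝ → ℝ := fun s => f (x + s • v) - s * ⟪f' x, v⟫ - ℓ / 2 * ‖v‖ ^ 2 * s ^ 2
  have hφ : ∀ s, HasDerivAt φ (⟪f' (x + s • v), v⟫ - ⟪f' x, v⟫ - ℓ * ‖v‖ ^ 2 * s) s := by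
    intro s
    have hline : HasDerivAt (fun s : ℝ => x + s • v) v s := by
      simpa using ((hasDerivAt_id s).smul_const v).const_add x
    refine ((((hgrad _).hasFDerivAt.comp_hasDerivAt s hline).sub
      ((hasDerivAt_id s).mul_const ⟪f' x, v⟫)).sub
        ((hasDerivAt_pow 2 s).const_mul (ℓ / 2 * ‖v‖ ^ 2))).congr_deriv ?_
    simp only [InnerProductSpace.toDual_apply_apply, Nat.cast_ofNat]
    ring
  have hanti : AntitoneOn φ (Ici 0) := by
    refine antitoneOn_of_hasDerivWithinAt_nonpos (convex_Ici 0)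
      (fun s _ => (hφ s).continuousAt.continuousWithinAt) (fun s _ => (hφ s).hasDerivWithinAt) ?_
    intro s hs
    rw [interior_Ici] at hs
    have hs' : ‖s • v‖ = s * ‖v‖ := by rw [norm_smul, Real.norm_of_nonneg hs.le]
    have := (real_inner_le_norm (f' (x + s • v) - f' x) v).trans
      (mul_le_mul_of_nonneg_right (by simpa [hs'] using hlip (x + s • v) x) (norm_nonneg v))
    rw [inner_sub_left] at this
    linarith
  have := hanti self_mem_Ici (mem_Ici.2 zero_le_one) zero_le_one
  simp only [φ, one_smul, one_mul, one_pow, mul_one, zero_smul, add_zero, zero_mul, sub_zero,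
    ne_eq, OfNat.ofNat_ne_zero, not_false_eq_true, zero_pow] at this
  linarith

/-- The supremum defining `f* x` is tested at `p + (x - ∇f p) / ℓ`. -/
theorem inner_sub_add_sq_le_of_lipschitz_gradient {ℓ : ℝ} (hℓ : 0 < ℓ)
    (hgrad : ∀ x, HasGradientAt f (f' x) x) (hlip : ∀ x y, ‖f' x - f' y‖ ≤ ℓ * ‖x - y‖)
    {x p : E} {c : ℝ} (hc : c ∈ upperBounds (range fun β => ⟪x, β⟫ - f β)) :
    ⟪x, p⟫ - f p + ‖x - f' p‖ ^ 2 / (2 * ℓ) ≤ c := by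
  set v := ℓ⁻¹ • (x - f' p)
  have hdesc := le_add_inner_add_sq_of_lipschitz_gradient hgrad hlip p v
  have hv : ⟪x, v⟫ - ⟪f' p, v⟫ - ℓ / 2 * ‖v‖ ^ 2 = ‖x - f' p‖ ^ 2 / (2 * ℓ) := by
    rw [← inner_sub_left, real_inner_smul_right, real_inner_self_eq_norm_sq, norm_smul,
      Real.norm_of_nonneg (inv_nonneg.2 hℓ.le)]
    field_simp
    ring
  have := hc ⟨p + v, rfl⟩
  simp only [inner_add_right] at this
  linarith

theorem norm_sub_sq_le_of_isMinOn_conjugate_comp {F : Type*} [NormedAddCommGroup F]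
    [NormedSpace ℝ F] {μ ℓ : ℝ} (hμ : 0 < μ) (hℓ : 0 < ℓ)
    (hgrad : ∀ x, HasGradientAt f (f' x) x) (hlip : ∀ x y, ‖f' x - f' y‖ ≤ ℓ * ‖x - y‖)
    {fstar : E → ℝ} (hfstar : ∀ x, IsLUB (range fun β => ⟪x, β⟫ - f β) (fstar x))
    (A : F →L[ℝ] E) {β : F → E} (hmax : ∀ a b, ⟪A a, b⟫ - f b ≤ ⟪A a, β a⟫ - f (β a))
    (hβ : ∀ a a', μ * ‖β a - β a'‖ ≤ ‖A a - A a'‖) {S : Set F} (hS : Convex ℝ S)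
    {a abar : F} (ha : a ∈ S) (habar : abar ∈ S) (hmin : IsMinOn (fun a => fstar (A a)) S abar) :
    ‖A a - A abar‖ ^ 2 ≤ 2 * ℓ * (fstar (A a) - fstar (A abar)) := by
  have hopt : 0 ≤ ⟪A a - A abar, β abar⟫ := by
    simpa [real_inner_comm] using hmin.localize.hasFDerivWithinAt_nonneg
      (hasFDerivAt_conjugate_comp hfstar A hmax hμ hβ abar).hasFDerivWithinAt
      (sub_mem_posTangentConeAt_of_segment_subset (hS.segment_subset habar ha))
  have hlow := inner_sub_add_sq_le_of_lipschitz_gradient hℓ hgrad hlip (hfstar (A a)).1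
    (p := β abar)
  rw [(hgrad _).eq_of_forall_inner_sub_le (hmax abar)] at hlow
  rw [inner_sub_left] at hopt
  rw [← div_le_iff₀' (by positivity)]
  linarith [(hfstar (A abar)).eq_inner_sub_of_forall_le (hmax abar)]

end Conjugate

theorem convex_binfBall (m : ℕ) (lam : ℝ) : Convex ℝ (BinfBall m lam) := by
  intro x hx y hy s t hs ht hst i
  calc |(s • x + t • y) i| ≤ s * |x i| + t * |y i| := by
        simpa [abs_mul, abs_of_nonneg hs, abs_of_nonneg ht] using abs_add_le (s * x i) (t * y i)
    _ ≤ s * lam + t * lam := by gcongr; exacts [hx i, hy i]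
    _ = lam := by rw [← add_mul, hst, one_mul]

theorem inner_toEuclideanLin_transpose {m d : Type*} [Fintype m] [Fintype d] [DecidableEq m] [DecidableEq d]
    (D : Matrix m d ℝ) (α : EuclideanSpace ℝ m) (β : EuclideanSpace ℝ d) :
    ⟪toEuclideanLin Dᵀ α, β⟫ = ⟪α, toEuclideanLin D β⟫ := by
  rw [← conjTranspose_eq_transpose_of_trivial, toEuclideanLin_conjTranspose_eq_adjoint,
    LinearMap.adjoint_inner_left]

theorem dual_gap_bounds_general
    (d m : ℕ)
    (f : EuclideanSpace ℝ (Fin d) → ℝ)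
    (f' : EuclideanSpace ℝ (Fin d) → EuclideanSpace ℝ (Fin d))
    (μ ℓ : ℝ) (hμ : 0 < μ) (hμℓ : μ ≤ ℓ)
    (hgrad : ∀ x, HasGradientAt f (f' x) x)
    (hsc : ∀ β₁ β₂ : EuclideanSpace ℝ (Fin d),
      μ * ‖β₁ - β₂‖ ^ 2 ≤ ⟪f' β₁ - f' β₂, β₁ - β₂⟫)
    (hlip : ∀ β₁ β₂ : EuclideanSpace ℝ (Fin d),
      ‖f' β₁ - f' β₂‖ ≤ ℓ * ‖β₁ - β₂‖)
    (D : Matrix (Fin m) (Fin d) ℝ) (lam : ℝ)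
    (fstar : EuclideanSpace ℝ (Fin d) → ℝ)
    (hfstar : ∀ x, IsLUB (Set.range fun β => ⟪x, β⟫ - f β) (fstar x))
    (fbar : EuclideanSpace ℝ (Fin m) → ℝ)
    (hfbar : ∀ a, fbar a = fstar (Matrix.toEuclideanLin (𝕜 := ℝ) Dᵀ a))
    (Ω : Set (EuclideanSpace ℝ (Fin m)))
    (hΩ : Ω = {a | a ∈ BinfBall m lam ∧ ∀ a' ∈ BinfBall m lam, fbar a ≤ fbar a'})
    (βs : EuclideanSpace ℝ (Fin m) → EuclideanSpace ℝ (Fin d))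
    (hβs : ∀ α β, f (βs α) - ⟪α, Matrix.toEuclideanLin (𝕜 := ℝ) D (βs α)⟫ ≤
        f β - ⟪α, Matrix.toEuclideanLin (𝕜 := ℝ) D β⟫) :
    ∀ a ∈ BinfBall m lam, ∀ abar ∈ Ω,
      ‖Matrix.toEuclideanLin (𝕜 := ℝ) Dᵀ a - Matrix.toEuclideanLin (𝕜 := ℝ) Dᵀ abar‖ ^ 2 ≤
        2 * ℓ * (fbar a - fbar abar) ∧
      ‖βs a - βs abar‖ ^ 2 ≤ (2 * ℓ / μ ^ 2) * (fbar a - fbar abar) := by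
  subst hΩ
  obtain rfl : fbar = _ := funext hfbar
  rintro a ha abar ⟨habar, hmin⟩
  let A := LinearMap.toContinuousLinearMap (Matrix.toEuclideanLin (𝕜 := ℝ) Dᵀ)
  have hA : ∀ α β, ⟪A α, β⟫ = ⟪α, toEuclideanLin D β⟫ := inner_toEuclideanLin_transpose D
  have hmax : ∀ α β, ⟪A α, β⟫ - f β ≤ ⟪A α, βs α⟫ - f (βs α) := fun α β => by
    linarith [hA α β, hA α (βs α), hβs α β]
  have hβ : ∀ α α', μ * ‖βs α - βs α'‖ ≤ ‖A α - A α'‖ := fun α α' => by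
    simpa only [(hgrad _).eq_of_forall_inner_sub_le (hmax _)] using
      mul_norm_sub_le_of_strongly_monotone hsc (βs α) (βs α')
  have hfirst := norm_sub_sq_le_of_isMinOn_conjugate_comp hμ (hμ.trans_le hμℓ) hgrad hlip hfstar
    A hmax hβ (convex_binfBall m lam) ha habar (isMinOn_iff.2 hmin)
  refine ⟨hfirst, ?_⟩
  rw [div_mul_eq_mul_div, le_div_iff₀ (by positivity)]
  calc ‖βs a - βs abar‖ ^ 2 * μ ^ 2 = (μ * ‖βs a - βs abar‖) ^ 2 := by ring
    _ ≤ ‖A a - A abar‖ ^ 2 := by gcongr; exact hβ a abar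
    _ ≤ _ := hfirst

/-- for every `α ∈ B∞(λ)` and every `ᾱ ∈ Ω*`,
`‖Dᵀα − Dᵀᾱ‖² ≤ 2ℓ (f̄(α) − f̄(ᾱ))` and consequently
`‖β*(α) − β*(ᾱ)‖² ≤ (2ℓ/μ²)(f̄(α) − f̄(ᾱ))`. -/
theorem dual_gap_bounds
    (d m : ℕ) (hd : 0 < d) (hm : 0 < m)
    (f : EuclideanSpace ℝ (Fin d) → ℝ)
    (f' : EuclideanSpace ℝ (Fin d) → EuclideanSpace ℝ (Fin d))
    (μ ℓ : ℝ) (hμ : 0 < μ) (hμℓ : μ ≤ ℓ)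
    (hconv : ConvexOn ℝ Set.univ f)
    (hgrad : ∀ x, HasGradientAt f (f' x) x)
    (hsc : ∀ β₁ β₂ : EuclideanSpace ℝ (Fin d),
      μ * ‖β₁ - β₂‖ ^ 2 ≤ ⟪f' β₁ - f' β₂, β₁ - β₂⟫)
    (hlip : ∀ β₁ β₂ : EuclideanSpace ℝ (Fin d),
      ‖f' β₁ - f' β₂‖ ≤ ℓ * ‖β₁ - β₂‖)
    (D : Matrix (Fin m) (Fin d) ℝ) (lam : ℝ) (hlam : 0 < lam)
    (fstar : EuclideanSpace ℝ (Fin d) → ℝ)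
    (hfstar : ∀ x, IsLUB (Set.range fun β => ⟪x, β⟫ - f β) (fstar x))
    (fbar : EuclideanSpace ℝ (Fin m) → ℝ)
    (hfbar : ∀ a, fbar a = fstar (Matrix.toEuclideanLin (𝕜 := ℝ) Dᵀ a))
    (Ω : Set (EuclideanSpace ℝ (Fin m)))
    (hΩ : Ω = {a | a ∈ BinfBall m lam ∧ ∀ a' ∈ BinfBall m lam, fbar a ≤ fbar a'})
    (βs : EuclideanSpace ℝ (Fin m) → EuclideanSpace ℝ (Fin d))
    (hβs : ∀ α β, f (βs α) - ⟪α, Matrix.toEuclideanLin (𝕜 := ℝ) D (βs α)⟫ ≤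
        f β - ⟪α, Matrix.toEuclideanLin (𝕜 := ℝ) D β⟫) :
    ∀ a ∈ BinfBall m lam, ∀ abar ∈ Ω,
      ‖Matrix.toEuclideanLin (𝕜 := ℝ) Dᵀ a - Matrix.toEuclideanLin (𝕜 := ℝ) Dᵀ abar‖ ^ 2 ≤
        2 * ℓ * (fbar a - fbar abar) ∧
      ‖βs a - βs abar‖ ^ 2 ≤ (2 * ℓ / μ ^ 2) * (fbar a - fbar abar) :=
  dual_gap_bounds_general d m f f' μ ℓ hμ hμℓ hgrad hsc hlip D lam fstar hfstar fbar hfbar Ω hΩ βs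
    hβs
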